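/- Let {f_{α,γ}}_{α,γ∈ℤ} ⊆ ℂ[λ,∂] satisfy the structure coefficient equation (βλ - αμ) f_{α+β,γ}(λ+μ, ∂) = f_{β,γ}(μ, ∂+λ) f_{α,β+γ}(λ, ∂) - f_{α,γ}(λ, ∂+μ) f_{β,α+γ}(μ, ∂). If f_{1,γ₁} = 0 and f_{1,γ₂} = 0 for some integers γ₁ < γ₂, then f_{1,γ} = 0 for all γ with γ₁ ≤ γ ≤ γ₂. -/

import Mathlib

/-!
Put `α = 1` in the structure equation: the left side is `(βλ - μ) f_{1+β,γ}(λ+μ,∂)`, and the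
factor `βλ - μ` cancels in the domain `ℂ[λ,μ,∂]`. So whenever `f_{1,γ₀} = 0`, induction on `n`
gives `f_{n+1,γ} = 0` on the window `γ₀ - n ≤ γ ≤ γ₀`. With `n = γ₂ - γ₁` the windows below
`γ₁` and `γ₂` both vanish, and in the equation for `(α, β) = (n + 1, -n)`, whose left side
carries `f_{1,γ}`, each product on the right has a factor in one of these windows.
-/

open MvPolynomial

/-- Substitute the two variables of `f ∈ ℂ[λ,∂]` by elements of `ℂ[λ,μ,∂]`. -/
noncomputable def sub2 (f : MvPolynomial (Fin 2) ℂ) (a b : MvPolynomial (Fin 3) ℂ) :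
    MvPolynomial (Fin 3) ℂ :=
  aeval ![a, b] f

/-- The structure coefficient equation of a free intermediate series module over the
Block-type Lie conformal algebra `B`, as an identity in `ℂ[λ,μ,∂]`
(`λ = X 0`, `μ = X 1`, `∂ = X 2`):
`(βλ - αμ) f_{α+β,γ}(λ+μ,∂)
   = f_{β,γ}(μ,∂+λ) f_{α,β+γ}(λ,∂) - f_{α,γ}(λ,∂+μ) f_{β,α+γ}(μ,∂)`. -/
def StructEq (f : ℤ → ℤ → MvPolynomial (Fin 2) ℂ) : Prop :=
  ∀ α β γ : ℤ,
    (C (β : ℂ) * X 0 - C (α : ℂ) * X 1) * sub2 (f (α + β) γ) (X 0 + X 1) (X 2)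
      = sub2 (f β γ) (X 1) (X 2 + X 0) * sub2 (f α (β + γ)) (X 0) (X 2)
        - sub2 (f α γ) (X 0) (X 2 + X 1) * sub2 (f β (α + γ)) (X 1) (X 2)

@[simp]
lemma sub2_zero (a b : MvPolynomial (Fin 3) ℂ) : sub2 0 a b = 0 := by
  simp [sub2]

/-- `λ ↦ λ`, `μ ↦ 0`, `∂ ↦ ∂` undoes the substitution `λ ↦ λ + μ`. -/
lemma sub2_add_injective : Function.Injective fun p => sub2 p (X 0 + X 1) (X 2) := by
  let ψ : MvPolynomial (Fin 3) ℂ →ₐ[ℂ] MvPolynomial (Fin 2) ℂ := aeval ![X 0, 0, X 1]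
  have hψ : ψ.comp (aeval ![X 0 + X 1, X 2]) = AlgHom.id ℂ _ := by
    apply algHom_ext
    intro i
    fin_cases i <;> simp [ψ]
  intro p q hpq
  simpa [sub2] using
    (AlgHom.congr_fun hψ p).symm.trans ((congrArg ψ hpq).trans (AlgHom.congr_fun hψ q))

lemma C_mul_X_zero_sub_C_mul_X_one_ne_zero {a b : ℂ} (hab : a ≠ 0 ∨ b ≠ 0) :
    (C a * X 0 - C b * X 1 : MvPolynomial (Fin 3) ℂ) ≠ 0 := by
  intro h
  rcases hab with ha | hb
  · exact ha (by simpa using congrArg (eval ![1, 0, 0]) h)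
  · exact hb (by simpa using congrArg (eval ![0, 1, 0]) h)

namespace StructEq

variable {f : ℤ → ℤ → MvPolynomial (Fin 2) ℂ}

lemma eq_zero_of_products_eq_zero (hf : StructEq f) {α β γ : ℤ} (hαβ : α ≠ 0 ∨ β ≠ 0)
    (h₁ : f β γ = 0 ∨ f α (β + γ) = 0) (h₂ : f α γ = 0 ∨ f β (α + γ) = 0) :
    f (α + β) γ = 0 := by
  have hrhs := hf α β γ
  have hfac : (C (β : ℂ) * X 0 - C (α : ℂ) * X 1 : MvPolynomial (Fin 3) ℂ) ≠ 0 :=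
    C_mul_X_zero_sub_C_mul_X_one_ne_zero (by rcases hαβ with h | h <;> simp [h])
  rcases h₁ with h₁ | h₁ <;> rcases h₂ with h₂ | h₂ <;>
    simp only [h₁, h₂, sub2_zero, zero_mul, mul_zero, sub_zero, mul_eq_zero, hfac,
      false_or] at hrhs <;>
    exact sub2_add_injective (hrhs.trans (sub2_zero _ _).symm)

lemma natCast_add_one_eq_zero (hf : StructEq f) {γ₀ : ℤ} (h₀ : f 1 γ₀ = 0) :
    ∀ n : ℕ, ∀ γ : ℤ, γ₀ - n ≤ γ → γ ≤ γ₀ → f (n + 1) γ = 0 := by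
  intro n
  induction n with
  | zero =>
    intro γ hl hr
    obtain rfl : γ = γ₀ := by omega
    simpa using h₀
  | succ n ih =>
    intro γ hl hr
    have h₁ : f (n + 1) γ = 0 ∨ f 1 (n + 1 + γ) = 0 := by
      by_cases h : γ₀ - n ≤ γ
      · exact .inl (ih γ h hr)
      · exact .inr (by rwa [show (n : ℤ) + 1 + γ = γ₀ by omega])
    have h₂ : f 1 γ = 0 ∨ f (n + 1) (1 + γ) = 0 := by
      by_cases h : γ = γ₀
      · exact .inl (h ▸ h₀)
      · exact .inr (ih (1 + γ) (by omega) (by omega))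
    have := hf.eq_zero_of_products_eq_zero (.inl one_ne_zero) h₁ h₂
    rwa [add_comm (1 : ℤ)] at this

end StructEq

theorem lemma_strive1_a_general (f : ℤ → ℤ → MvPolynomial (Fin 2) ℂ) (hf : StructEq f)
    (γ₁ γ₂ : ℤ) (h1 : f 1 γ₁ = 0) (h2 : f 1 γ₂ = 0) :
    ∀ γ : ℤ, γ₁ ≤ γ → γ ≤ γ₂ → f 1 γ = 0 := by
  intro γ hγ₁ hγ₂
  obtain ⟨n, hn⟩ := Int.eq_ofNat_of_zero_le (sub_nonneg.2 (hγ₁.trans hγ₂))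
  have hupper : f (n + 1) γ = 0 :=
    hf.natCast_add_one_eq_zero h2 n γ (by omega) hγ₂
  have hlower : f (n + 1) (-n + γ) = 0 :=
    hf.natCast_add_one_eq_zero h1 n (-n + γ) (by omega) (by omega)
  have := hf.eq_zero_of_products_eq_zero (.inl n.cast_add_one_ne_zero) (.inr hlower)
    (.inl hupper)
  rwa [add_neg_cancel_comm] at this

/-- If `f_{1,γ₁} = f_{1,γ₂} = 0` for some `γ₁ < γ₂`, then `f_{1,γ} = 0` for all
`γ₁ ≤ γ ≤ γ₂`. -/
theorem lemma_strive1_a (f : ℤ → ℤ → MvPolynomial (Fin 2) ℂ) (hf : StructEq f)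
    (γ₁ γ₂ : ℤ) (h12 : γ₁ < γ₂) (h1 : f 1 γ₁ = 0) (h2 : f 1 γ₂ = 0) :
    ∀ γ : ℤ, γ₁ ≤ γ → γ ≤ γ₂ → f 1 γ = 0 :=
  lemma_strive1_a_general f hf γ₁ γ₂ h1 h2
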